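/- Let J₁, J₂ : ℝ³ → ℂ³ be essentially bounded with compact support, let (x̂₀, l, m) be an orthonormal basis of ℝ³, let e ∈ {l, m}, and let K = (k_min, k_max) with 0 < k_min < k_max. If e · E^∞(x̂₀, k; J₁) = e · E^∞(x̂₀, k; J₂) for all k ∈ K, then the slice projections agree almost everywhere: Ĵ₁,_e(α) = Ĵ₂,_e(α) for Lebesgue-almost every α ∈ ℝ. -/

import Mathlib

open MeasureTheory Complex

noncomputable section

abbrev R3 := EuclideanSpace ℝ (Fin 3)
abbrev C3 := EuclideanSpace ℂ (Fin 3)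

/-- The complex component of a ℂ³-vector in a real direction `e`. -/
def dotC (e : R3) (w : C3) : ℂ := ∑ i, (e i : ℂ) * w i

/-- The complexification of a real vector. -/
def cplx (x : R3) : C3 := (WithLp.equiv 2 (Fin 3 → ℂ)).symm fun i => (x i : ℂ)

/-- The electric far field pattern `E^∞(x̂, k; J) = iωμ (v − (x̂·v) x̂)`,
where `ω = k/√(εμ)` and `v = ∫ exp(−ik x̂·y) J(y) dy`. -/
def farField (ε μ k : ℝ) (J : R3 → C3) (x : R3) : C3 :=
  (Complex.I * ((k / Real.sqrt (ε * μ) : ℝ) : ℂ) * (μ : ℂ)) •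
    ((∫ y, Complex.exp (-Complex.I * (k : ℂ) * ((inner ℝ x y : ℝ) : ℂ)) • J y) -
      (dotC x (∫ y, Complex.exp (-Complex.I * (k : ℂ) * ((inner ℝ x y : ℝ) : ℂ)) • J y)) • cplx x)

/-- `Ĵ_e(α)`: the integral of `e·J` over the hyperplane `{y : y·x̂₀ + α = 0}`,
parametrized as `y = −α x̂₀ + s l + t m`. -/
def sliceProj (J : R3 → C3) (xhat l m e : R3) (α : ℝ) : ℂ :=
  ∫ st : ℝ × ℝ, dotC e (J (-α • xhat + st.1 • l + st.2 • m))

/-!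
Since `e ⊥ x̂₀`, the `e`-component of `E^∞(x̂₀, k; J)` is a nonzero multiple of
`∫ exp(−ik x̂₀·y) (e·J)(y) dy`, and Fubini in the coordinates `y = a x̂₀ + s l + t m` turns this
into the one-dimensional Fourier transform of the plane integrals `a ↦ Ĵ_e(−a)`. The difference
`g` of these plane integrals for `J₁` and `J₂` is integrable with bounded support, so
`z ↦ ∫ exp(z a) g(a) da` is entire; it vanishes on the segment `−i K` of the imaginary axis, hence
everywhere, and so do all its derivatives at `0`, the moments `∫ aⁿ g(a) da`. By Weierstrass
approximation `g` then integrates to zero against every smooth compactly supported function,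
so `g = 0` almost everywhere.
-/

open Filter Set Topology
open scoped InnerProductSpace

section BoundedSupport

variable {E : Type*} [NormedAddCommGroup E] [NormedSpace ℂ E] {g : ℝ → E} {R : ℝ}

def laplaceMoment (g : ℝ → E) (n : ℕ) (z : ℂ) : E :=
  ∫ a : ℝ, ((a : ℂ) ^ n * cexp (z * a)) • g a

lemma norm_pow_mul_cexp_smul_le (hR : ∀ a, R < |a| → g a = 0) (n : ℕ) (z : ℂ) (a : ℝ) :
    ‖((a : ℂ) ^ n * cexp (z * a)) • g a‖ ≤ R ^ n * Real.exp (‖z‖ * R) * ‖g a‖ := by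
  by_cases hga : g a = 0
  · simp [hga]
  have haR : |a| ≤ R := not_lt.mp (mt (hR a) hga)
  have hexp : ‖cexp (z * a)‖ ≤ Real.exp (‖z‖ * R) := by
    rw [norm_exp, re_mul_ofReal, Real.exp_le_exp]
    calc z.re * a ≤ |z.re| * |a| := by rw [← abs_mul]; exact le_abs_self _
      _ ≤ ‖z‖ * R := mul_le_mul (abs_re_le_norm z) haR (abs_nonneg a) (norm_nonneg z)
  rw [norm_smul, norm_mul, norm_pow, norm_real]
  have hpow : ‖a‖ ^ n ≤ R ^ n := pow_le_pow_left₀ (norm_nonneg a) haR n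
  have hR0 : 0 ≤ R := (abs_nonneg a).trans haR
  gcongr

lemma integrable_pow_mul_cexp_smul (hg : Integrable g) (hR : ∀ a, R < |a| → g a = 0)
    (n : ℕ) (z : ℂ) : Integrable fun a : ℝ => ((a : ℂ) ^ n * cexp (z * a)) • g a :=
  (hg.norm.const_mul _).mono' (by fun_prop)
    (Eventually.of_forall (norm_pow_mul_cexp_smul_le hR n z))

lemma hasDerivAt_laplaceMoment (hg : Integrable g) (hR : ∀ a, R < |a| → g a = 0)
    (hR0 : 0 ≤ R) (n : ℕ) (z₀ : ℂ) :
    HasDerivAt (laplaceMoment g n) (laplaceMoment g (n + 1) z₀) z₀ := by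
  refine (hasDerivAt_integral_of_dominated_loc_of_deriv_le (Metric.ball_mem_nhds z₀ one_pos)
    (F := fun z (a : ℝ) => ((a : ℂ) ^ n * cexp (z * a)) • g a)
    (F' := fun z (a : ℝ) => ((a : ℂ) ^ (n + 1) * cexp (z * a)) • g a)
    (bound := fun a => R ^ (n + 1) * Real.exp ((‖z₀‖ + 1) * R) * ‖g a‖)
    (Eventually.of_forall fun z => (integrable_pow_mul_cexp_smul hg hR n z).1)
    (integrable_pow_mul_cexp_smul hg hR n z₀) (integrable_pow_mul_cexp_smul hg hR (n + 1) z₀).1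
    (Eventually.of_forall fun a z hz => ?_) (hg.norm.const_mul _)
    (Eventually.of_forall fun a z _ => ?_)).2
  · have hz : ‖z‖ ≤ ‖z₀‖ + 1 := by
      linarith [norm_le_norm_add_norm_sub' z z₀, mem_ball_iff_norm.mp hz]
    refine (norm_pow_mul_cexp_smul_le hR (n + 1) z a).trans ?_
    gcongr
  · have := ((hasDerivAt_mul_const (x := z) (a : ℂ)).cexp.const_mul ((a : ℂ) ^ n)).smul_const
      (g a)
    convert this using 2
    ring

lemma laplaceMoment_eq_zero (hg : Integrable g) (hR : ∀ a, R < |a| → g a = 0) (hR0 : 0 ≤ R)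
    (h0 : laplaceMoment g 0 = 0) : ∀ n, laplaceMoment g n = 0
  | 0 => h0
  | n + 1 => funext fun z => by
    rw [← (hasDerivAt_laplaceMoment hg hR hR0 n z).deriv, laplaceMoment_eq_zero hg hR hR0 h0 n]
    exact deriv_const z 0

lemma laplaceMoment_apply_zero (n : ℕ) : laplaceMoment g n 0 = ∫ a : ℝ, a ^ n • g a := by
  simp [laplaceMoment, ← ofReal_pow, Complex.coe_smul]

lemma integrable_pow_smul (hg : Integrable g) (hR : ∀ a, R < |a| → g a = 0) (n : ℕ) :
    Integrable fun a : ℝ => a ^ n • g a := by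
  simpa [← ofReal_pow, Complex.coe_smul] using integrable_pow_mul_cexp_smul hg hR n 0

lemma integrable_eval_smul (hg : Integrable g) (hR : ∀ a, R < |a| → g a = 0)
    (p : Polynomial ℝ) : Integrable fun a : ℝ => p.eval a • g a := by
  simp_rw [Polynomial.eval_eq_sum_range, Finset.sum_smul, mul_smul]
  exact integrable_finsetSum _ fun i _ => (integrable_pow_smul hg hR i).smul (p.coeff i)

lemma integral_eval_smul_eq_zero (hg : Integrable g) (hR : ∀ a, R < |a| → g a = 0)
    (hmom : ∀ n : ℕ, ∫ a : ℝ, a ^ n • g a = 0) (p : Polynomial ℝ) :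
    ∫ a : ℝ, p.eval a • g a = 0 := by
  simp_rw [Polynomial.eval_eq_sum_range, Finset.sum_smul, mul_smul]
  rw [integral_finsetSum]
  · simp [integral_smul, hmom]
  · exact fun i _ => (integrable_pow_smul hg hR i).smul (p.coeff i)

variable [CompleteSpace E]

lemma laplaceMoment_zero_eq_zero_of_forall_mem_Ioo (hg : Integrable g) (hR : ∀ a, R < |a| → g a = 0)
    (hR0 : 0 ≤ R) {kmin kmax : ℝ} (hkk : kmin < kmax)
    (hvan : ∀ k ∈ Ioo kmin kmax, laplaceMoment g 0 (-I * k) = 0) :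
    laplaceMoment g 0 = 0 := by
  have hdiff : Differentiable ℂ (laplaceMoment g 0) := fun z =>
    (hasDerivAt_laplaceMoment hg hR hR0 0 z).differentiableAt
  have hA : AnalyticOnNhd ℂ (laplaceMoment g 0) univ :=
    hdiff.differentiableOn.analyticOnNhd isOpen_univ
  obtain ⟨k₀, hk₀⟩ := nonempty_Ioo.mpr hkk
  have hrot : Tendsto (fun k : ℝ => -I * k) (𝓝[≠] k₀) (𝓝[≠] (-I * k₀)) := by
    refine tendsto_nhdsWithin_of_tendsto_nhds_of_eventually_within _
      ((by fun_prop : Continuous fun k : ℝ => -I * k).continuousWithinAt) ?_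
    filter_upwards [self_mem_nhdsWithin] with k hk
    simpa [I_ne_zero] using hk
  have hfreq : ∃ᶠ z in 𝓝[≠] (-I * k₀), laplaceMoment g 0 z = 0 :=
    hrot.frequently (eventually_nhdsWithin_of_eventually_nhds
      (eventually_of_mem (Ioo_mem_nhds hk₀.1 hk₀.2) hvan)).frequently
  funext z
  exact hA.eqOn_zero_of_preconnected_of_frequently_eq_zero isPreconnected_univ (mem_univ _)
    hfreq (mem_univ z)

lemma ae_eq_zero_of_integral_pow_smul_eq_zero (hg : Integrable g) (hR : ∀ a, R < |a| → g a = 0)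
    (hmom : ∀ n : ℕ, ∫ a : ℝ, a ^ n • g a = 0) : ∀ᵐ a, g a = 0 := by
  refine ae_eq_zero_of_integral_contDiff_smul_eq_zero hg.locallyIntegrable fun ψ hψ hψc => ?_
  set C := ∫ a, ‖g a‖
  -- Approximate `ψ` uniformly on `[-R, R]` by polynomials, which integrate to zero against `g`.
  have happrox : ∀ ε > 0, ‖∫ a, ψ a • g a‖ ≤ ε * C := fun ε hε => by
    obtain ⟨p, hp⟩ := exists_polynomial_near_of_continuousOn (-R) R ψ
      hψ.continuous.continuousOn ε hε
    have hclose : ∀ a, ‖(ψ a - p.eval a) • g a‖ ≤ ε * ‖g a‖ := fun a => by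
      by_cases hga : g a = 0
      · simp [hga]
      have ha : a ∈ Icc (-R) R := abs_le.mp (not_lt.mp (mt (hR a) hga))
      rw [norm_smul, Real.norm_eq_abs, abs_sub_comm]
      exact mul_le_mul_of_nonneg_right (hp a ha).le (norm_nonneg _)
    have hψg : Integrable fun a => ψ a • g a :=
      hg.smul_of_top_right (𝕜 := ℝ) (hψ.continuous.memLp_top_of_hasCompactSupport hψc volume)
    calc ‖∫ a, ψ a • g a‖ = ‖∫ a, (ψ a - p.eval a) • g a‖ := by
          simp_rw [sub_smul]
          rw [integral_sub hψg (integrable_eval_smul hg hR p),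
            integral_eval_smul_eq_zero hg hR hmom, sub_zero]
      _ ≤ ∫ a, ε * ‖g a‖ :=
          norm_integral_le_of_norm_le (hg.norm.const_mul ε) (Eventually.of_forall hclose)
      _ = ε * C := integral_const_mul ε _
  have hC : 0 ≤ C := integral_nonneg fun _ => norm_nonneg _
  refine norm_le_zero_iff.mp (le_of_forall_pos_le_add fun δ hδ => ?_)
  calc ‖∫ a, ψ a • g a‖ ≤ δ / (C + 1) * C := happrox _ (by positivity)
    _ ≤ 0 + δ := by
      rw [zero_add, div_mul_eq_mul_div, div_le_iff₀ (by positivity)]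
      nlinarith

theorem ae_eq_zero_of_integral_cexp_smul_eq_zero_on_Ioo (hg : Integrable g)
    (hR : ∀ a, R < |a| → g a = 0) {kmin kmax : ℝ} (hkk : kmin < kmax)
    (hvan : ∀ k ∈ Ioo kmin kmax, ∫ a : ℝ, cexp (-I * k * a) • g a = 0) :
    ∀ᵐ a, g a = 0 := by
  have hR' : ∀ a, max R 0 < |a| → g a = 0 := fun a ha => hR a ((le_max_left _ _).trans_lt ha)
  have h0 : laplaceMoment g 0 = 0 :=
    laplaceMoment_zero_eq_zero_of_forall_mem_Ioo hg hR' (le_max_right _ _) hkk fun k hk => by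
      simpa [laplaceMoment] using hvan k hk
  refine ae_eq_zero_of_integral_pow_smul_eq_zero hg hR fun n => ?_
  rw [← laplaceMoment_apply_zero, laplaceMoment_eq_zero hg hR' (le_max_right _ _) h0 n]
  rfl

theorem ae_eq_of_integral_cexp_smul_eq_on_Ioo {g₁ g₂ : ℝ → E} (hg₁ : Integrable g₁)
    (hg₂ : Integrable g₂) (hR₁ : ∀ a, R < |a| → g₁ a = 0) (hR₂ : ∀ a, R < |a| → g₂ a = 0)
    {kmin kmax : ℝ} (hkk : kmin < kmax)
    (heq : ∀ k ∈ Ioo kmin kmax,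
      ∫ a : ℝ, cexp (-I * k * a) • g₁ a = ∫ a : ℝ, cexp (-I * k * a) • g₂ a) :
    g₁ =ᵐ[volume] g₂ := by
  have hint {g : ℝ → E} (hg : Integrable g) (hR : ∀ a, R < |a| → g a = 0) (k : ℝ) :
      Integrable fun a : ℝ => cexp (-I * k * a) • g a := by
    simpa using integrable_pow_mul_cexp_smul hg hR 0 (-I * k)
  have hsub := ae_eq_zero_of_integral_cexp_smul_eq_zero_on_Ioo (R := R) (hg₁.sub hg₂)
    (fun a ha => by simp [hR₁ a ha, hR₂ a ha]) hkk fun k hk => by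
      simp only [Pi.sub_apply, smul_sub]
      rw [integral_sub (hint hg₁ hR₁ k) (hint hg₂ hR₂ k), heq k hk, sub_self]
  filter_upwards [hsub] with a ha using sub_eq_zero.mp ha

end BoundedSupport

lemma Orthonormal.exists_orthonormalBasis_coe_eq {F ι : Type*} [NormedAddCommGroup F]
    [InnerProductSpace ℝ F] [FiniteDimensional ℝ F] [Fintype ι] {v : ι → F}
    (hv : Orthonormal ℝ v) (hcard : Fintype.card ι = Module.finrank ℝ F) :
    ∃ b : OrthonormalBasis ι ℝ F, ⇑b = v :=
  ⟨.mk hv (hv.linearIndependent.span_eq_top_of_card_eq_finrank' hcard).ge,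
    OrthonormalBasis.coe_mk hv _⟩

section PlaneIntegral

variable {F : Type*} [NormedAddCommGroup F] [InnerProductSpace ℝ F] [MeasurableSpace F]
  [BorelSpace F] (b : OrthonormalBasis (Fin 3) ℝ F) {f : F → ℂ}

def OrthonormalBasis.coordEquiv : (ℝ × ℝ × ℝ) ≃ᵐ F :=
  ((MeasurableEquiv.refl ℝ).prodCongr MeasurableEquiv.finTwoArrow.symm).trans <|
    (MeasurableEquiv.piFinSuccAbove (fun _ : Fin 3 => ℝ) 0).symm.trans <|
      (MeasurableEquiv.toLp 2 (Fin 3 → ℝ)).trans b.measurableEquiv.symm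

lemma OrthonormalBasis.repr_coordEquiv (p : ℝ × ℝ × ℝ) :
    b.repr (b.coordEquiv p) = !₂[p.1, p.2.1, p.2.2] := by
  refine (b.repr.apply_symm_apply _).trans ?_
  ext i
  fin_cases i <;> rfl

lemma OrthonormalBasis.coordEquiv_apply (p : ℝ × ℝ × ℝ) :
    b.coordEquiv p = p.1 • b 0 + p.2.1 • b 1 + p.2.2 • b 2 := by
  rw [← b.repr.symm_apply_apply (b.coordEquiv p), b.repr_coordEquiv, ← b.sum_repr_symm,
    Fin.sum_univ_three]
  simp

lemma OrthonormalBasis.inner_coordEquiv (p : ℝ × ℝ × ℝ) : ⟪b 0, b.coordEquiv p⟫_ℝ = p.1 := by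
  rw [← b.repr_apply_apply, b.repr_coordEquiv]
  simp

lemma OrthonormalBasis.measurePreserving_coordEquiv [FiniteDimensional ℝ F] :
    MeasurePreserving b.coordEquiv volume volume :=
  (((MeasurePreserving.id volume).prod (volume_preserving_finTwoArrow ℝ).symm).trans
    (volume_preserving_piFinSuccAbove (fun _ : Fin 3 => ℝ) 0).symm).trans
    ((EuclideanSpace.volume_preserving_symm_measurableEquiv_toLp (Fin 3)).symm.trans
      b.measurePreserving_measurableEquiv.symm)

def planeIntegral (f : F → ℂ) (a : ℝ) : ℂ :=
  ∫ st : ℝ × ℝ, f (a • b 0 + st.1 • b 1 + st.2 • b 2)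

lemma planeIntegral_eq (f : F → ℂ) (a : ℝ) :
    planeIntegral b f a = ∫ st : ℝ × ℝ, f (b.coordEquiv (a, st)) := by
  simp only [planeIntegral, b.coordEquiv_apply]

lemma integrable_comp_coordEquiv [FiniteDimensional ℝ F] (hf : Integrable f) :
    Integrable (fun p => f (b.coordEquiv p)) ((volume : Measure ℝ).prod volume) := by
  rw [← Measure.volume_eq_prod ℝ (ℝ × ℝ)]
  exact (b.measurePreserving_coordEquiv.integrable_comp_emb
    b.coordEquiv.measurableEmbedding).mpr hf

lemma integrable_planeIntegral [FiniteDimensional ℝ F] (hf : Integrable f) :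
    Integrable (planeIntegral b f) := by
  rw [show planeIntegral b f = _ from funext (planeIntegral_eq b f)]
  exact (integrable_comp_coordEquiv b hf).integral_prod_left

lemma integral_mul_planeIntegral [FiniteDimensional ℝ F] (hf : Integrable f) {φ : ℝ → ℂ}
    (hφ : Continuous φ) {C : ℝ} (hC : ∀ a, ‖φ a‖ ≤ C) :
    ∫ a, φ a * planeIntegral b f a = ∫ y, φ ⟪b 0, y⟫_ℝ * f y := by
  have hint : Integrable (fun p : ℝ × ℝ × ℝ => φ p.1 * f (b.coordEquiv p))
      ((volume : Measure ℝ).prod volume) :=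
    (integrable_comp_coordEquiv b hf).bdd_mul (hφ.comp continuous_fst).aestronglyMeasurable
      (Eventually.of_forall fun p => hC p.1)
  calc ∫ a, φ a * planeIntegral b f a
      = ∫ p : ℝ × ℝ × ℝ, φ p.1 * f (b.coordEquiv p) ∂(volume : Measure ℝ).prod volume := by
        rw [integral_prod _ hint]
        simp only [planeIntegral_eq, integral_const_mul]
    _ = ∫ p : ℝ × ℝ × ℝ, φ ⟪b 0, b.coordEquiv p⟫_ℝ * f (b.coordEquiv p) := by
        rw [Measure.volume_eq_prod ℝ (ℝ × ℝ)]
        simp only [b.inner_coordEquiv]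
    _ = ∫ y, φ ⟪b 0, y⟫_ℝ * f y :=
        b.measurePreserving_coordEquiv.integral_comp' (fun y => φ ⟪b 0, y⟫_ℝ * f y)

lemma planeIntegral_eq_zero {R : ℝ} (hf : ∀ y, R < ‖y‖ → f y = 0) {a : ℝ} (ha : R < |a|) :
    planeIntegral b f a = 0 := by
  refine (integral_congr_ae (Eventually.of_forall fun st => hf _ ?_)).trans (integral_zero _ _)
  calc R < |a| := ha
    _ = |⟪b 0, b.coordEquiv (a, st)⟫_ℝ| := by rw [b.inner_coordEquiv]
    _ ≤ ‖b.coordEquiv (a, st)‖ := by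
        simpa [b.orthonormal.1 0] using abs_real_inner_le_norm (b 0) (b.coordEquiv (a, st))
    _ = _ := by rw [b.coordEquiv_apply]

end PlaneIntegral

lemma dotC_eq_inner (e : R3) (w : C3) : dotC e w = ⟪cplx e, w⟫_ℂ := by
  simp [dotC, cplx, PiLp.inner_apply, mul_comm]

lemma inner_cplx_cplx (x y : R3) : ⟪cplx x, cplx y⟫_ℂ = (⟪x, y⟫_ℝ : ℂ) := by
  simp [cplx, PiLp.inner_apply, mul_comm]

lemma integrable_dotC (e : R3) {J : R3 → C3} (hJ : Integrable J) :
    Integrable fun y => dotC e (J y) := by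
  simpa only [dotC_eq_inner] using hJ.const_inner (cplx e)

lemma dotC_eq_zero_of_lt_norm (e : R3) {J : R3 → C3} {R : ℝ}
    (hJR : tsupport J ⊆ Metric.closedBall 0 R) {y : R3} (hy : R < ‖y‖) : dotC e (J y) = 0 := by
  rw [image_eq_zero_of_notMem_tsupport (f := J) fun hy' => hy.not_ge (by simpa using hJR hy')]
  simp [dotC]

lemma norm_cexp_neg_I_mul (k r : ℝ) : ‖cexp (-I * k * r)‖ = 1 := by
  simp [norm_exp]

lemma dotC_farField {ε μ k : ℝ} {J : R3 → C3} (hJ : Integrable J) {x e : R3}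
    (he : ⟪e, x⟫_ℝ = 0) :
    dotC e (farField ε μ k J x) = I * ((k / √(ε * μ) : ℝ) : ℂ) * μ *
      ∫ y, cexp (-I * k * ⟪x, y⟫_ℝ) * dotC e (J y) := by
  have hint : Integrable fun y => cexp (-I * k * ⟪x, y⟫_ℝ) • J y :=
    hJ.bdd_smul 1 (by fun_prop) (Eventually.of_forall fun y => (norm_cexp_neg_I_mul k _).le)
  simp only [farField, dotC_eq_inner, inner_smul_right, inner_sub_right, inner_cplx_cplx, he,
    ofReal_zero, mul_zero, sub_zero, ← integral_inner hint]

lemma dotC_farField_eq_integral_planeIntegral (b : OrthonormalBasis (Fin 3) ℝ R3)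
    {J : R3 → C3} (hJ : Integrable J) {e : R3} (he : ⟪e, b 0⟫_ℝ = 0) (ε μ k : ℝ) :
    dotC e (farField ε μ k J (b 0)) = I * ((k / √(ε * μ) : ℝ) : ℂ) * μ *
      ∫ a : ℝ, cexp (-I * k * a) * planeIntegral b (fun y => dotC e (J y)) a := by
  rw [dotC_farField hJ he, integral_mul_planeIntegral b (integrable_dotC e hJ) (by fun_prop)
    fun a => (norm_cexp_neg_I_mul k a).le]

lemma MeasureTheory.MemLp.integrable_of_hasCompactSupport {α E : Type*} [TopologicalSpace α]
    [MeasurableSpace α] [OpensMeasurableSpace α] [NormedAddCommGroup E] {μ : Measure α}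
    [IsFiniteMeasureOnCompacts μ] {f : α → E} (hf : MemLp f ⊤ μ) (hfc : HasCompactSupport f) :
    Integrable f μ :=
  memLp_one_iff_integrable.mp (hf.mono_exponent_of_measure_support_ne_top
    (fun _ hx => image_eq_zero_of_notMem_tsupport hx) hfc.measure_lt_top.ne le_top)

/-- If the far field components of two sources agree on a band of frequencies at a single
observation direction, then their slice projections agree almost everywhere. -/
theorem sliceProj_unique (ε μ : ℝ) (hε : 0 < ε) (hμ : 0 < μ)
    (J₁ J₂ : R3 → C3) (hJ₁b : MemLp J₁ ⊤ volume) (hJ₁c : HasCompactSupport J₁)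
    (hJ₂b : MemLp J₂ ⊤ volume) (hJ₂c : HasCompactSupport J₂)
    (xhat l m : R3) (hxh : ‖xhat‖ = 1) (hl : ‖l‖ = 1) (hm : ‖m‖ = 1)
    (hxl : (inner ℝ xhat l : ℝ) = 0) (hxm : (inner ℝ xhat m : ℝ) = 0)
    (hlm : (inner ℝ l m : ℝ) = 0)
    (e : R3) (he : e = l ∨ e = m)
    (kmin kmax : ℝ) (hkmin : 0 < kmin) (hkk : kmin < kmax)
    (hEq : ∀ k ∈ Set.Ioo kmin kmax,
      dotC e (farField ε μ k J₁ xhat) = dotC e (farField ε μ k J₂ xhat)) :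
    ∀ᵐ α : ℝ, sliceProj J₁ xhat l m e α = sliceProj J₂ xhat l m e α := by
  have hon : Orthonormal ℝ ![xhat, l, m] := by
    simp [orthonormal_vecCons_iff, Fin.forall_fin_two, hxh, hl, hm, hxl, hxm, hlm]
  obtain ⟨b, hb⟩ := hon.exists_orthonormalBasis_coe_eq (by simp)
  have hb0 : b 0 = xhat := by simp [hb]
  have hex : ⟪e, b 0⟫_ℝ = 0 := by rcases he with rfl | rfl <;> rwa [hb0, real_inner_comm]
  have hJ₁ := hJ₁b.integrable_of_hasCompactSupport hJ₁c
  have hJ₂ := hJ₂b.integrable_of_hasCompactSupport hJ₂c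
  obtain ⟨R, hR⟩ := (hJ₁c.union hJ₂c).isBounded.subset_closedBall 0
  have hvan₁ (y : R3) : R < ‖y‖ → dotC e (J₁ y) = 0 :=
    dotC_eq_zero_of_lt_norm e (subset_union_left.trans hR)
  have hvan₂ (y : R3) : R < ‖y‖ → dotC e (J₂ y) = 0 :=
    dotC_eq_zero_of_lt_norm e (subset_union_right.trans hR)
  have hslices := ae_eq_of_integral_cexp_smul_eq_on_Ioo
    (integrable_planeIntegral b (integrable_dotC e hJ₁))
    (integrable_planeIntegral b (integrable_dotC e hJ₂))
    (fun _ => planeIntegral_eq_zero b hvan₁) (fun _ => planeIntegral_eq_zero b hvan₂)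
    hkk fun k hk => by
      have hc : I * ((k / √(ε * μ) : ℝ) : ℂ) * μ ≠ 0 := by
        simp [I_ne_zero, hμ.ne', (hkmin.trans hk.1).ne', (Real.sqrt_pos.2 (mul_pos hε hμ)).ne']
      have hEqk := hEq k hk
      rw [← hb0, dotC_farField_eq_integral_planeIntegral b hJ₁ hex,
        dotC_farField_eq_integral_planeIntegral b hJ₂ hex] at hEqk
      exact mul_left_cancel₀ hc hEqk
  filter_upwards [(Measure.measurePreserving_neg volume).quasiMeasurePreserving.ae_eq_comp
    hslices] with α hα
  simpa [planeIntegral, sliceProj, hb] using hα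

end
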